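/- arXiv:1910.03635 — 6 statements merged into one kernel-verified Lean document; each statement's English description precedes it below -/
import Mathlib

section
/- For every tree T with at least 3 vertices, there exists an independent ve-dominating set S of T with |S| = i_ve(T) such that S contains no leaf of T. -/
variable {V : Type*} [Fintype V] [DecidableEq V]

/-- A vertex `u` ve-dominates an edge `e` if `e` is incident to some vertex of `N[u]`. -/
def veDominates (G : SimpleGraph V) (u : V) (e : Sym2 V) : Prop :=
  ∃ x ∈ e, x = u ∨ G.Adj u x

/-- `S` is a ve-dominating set: every edge is ve-dominated by some vertex of `S`. -/
def IsVEDomSet (G : SimpleGraph V) (S : Finset V) : Prop :=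
  ∀ e ∈ G.edgeSet, ∃ u ∈ S, veDominates G u e

/-- `S` is an independent set. -/
def IsIndepSet (G : SimpleGraph V) (S : Finset V) : Prop :=
  ∀ u ∈ S, ∀ v ∈ S, ¬ G.Adj u v

/-- The ve-domination number `γ_ve(G)`. -/
noncomputable def gammaVE (G : SimpleGraph V) : ℕ :=
  sInf {n | ∃ S : Finset V, IsVEDomSet G S ∧ S.card = n}

/-- The independent ve-domination number `i_ve(G)`. -/
noncomputable def iVE (G : SimpleGraph V) : ℕ :=
  sInf {n | ∃ S : Finset V, IsVEDomSet G S ∧ IsIndepSet G S ∧ S.card = n}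

/-!
Among the minimum independent ve-dominating sets choose one, `S`, with the fewest leaves, and
suppose it contains a leaf `v` with neighbour `u`. Every edge ve-dominated by `v` contains `u`,
and `u ∉ S` by independence. If `u` had a neighbour in `S \ {v}`, then `S \ {v}` would still be
ve-dominating, against minimality. Otherwise `(S \ {v}) ∪ {u}` is again a minimum independent
ve-dominating set, with one leaf fewer: in a tree on at least three vertices the neighbour of a
leaf is not a leaf.
-/

open Finset

namespace SimpleGraph

omit [Fintype V] [DecidableEq V] in
theorem Preconnected.eq_or_eq_of_forall_adj_eq {G : SimpleGraph V} (hG : G.Preconnected)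
    {u v : V} (hu : ∀ x, G.Adj u x → x = v) (hv : ∀ x, G.Adj v x → x = u) (w : V) :
    w = u ∨ w = v := by
  by_contra hw
  obtain ⟨p⟩ := hG v w
  obtain ⟨d, -, hd, hd'⟩ := p.exists_boundary_dart {u, v} (by simp) (by simpa using hw)
  rcases hd with hd | hd
  · exact hd' (Or.inr (hu _ (hd ▸ d.adj)))
  · exact hd' (Or.inl (hv _ (hd ▸ d.adj)))

theorem Preconnected.degree_ne_one_of_forall_adj_eq {G : SimpleGraph V} [DecidableRel G.Adj]
    (hG : G.Preconnected) (h3 : 3 ≤ Fintype.card V) {u v : V} (huv : G.Adj u v)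
    (hv : ∀ x, G.Adj v x → x = u) : G.degree u ≠ 1 := by
  intro hdeg
  have hu : ∀ x, G.Adj u x → x = v := fun x hx =>
    (degree_eq_one_iff_existsUnique_adj.mp hdeg).unique hx huv
  have hsub : (univ : Finset V) ⊆ {u, v} := fun w _ => by
    simpa using hG.eq_or_eq_of_forall_adj_eq hu hv w
  have := (card_le_card hsub).trans card_le_two
  rw [card_univ] at this
  omega

end SimpleGraph

theorem Finset.card_filter_insert_erase_lt {α : Type*} [DecidableEq α] {p : α → Prop}
    [DecidablePred p] {s : Finset α} {u v : α} (hu : ¬ p u) (hv : v ∈ s) (hpv : p v) :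
    #((insert u (s.erase v)).filter p) < #(s.filter p) := by
  rw [filter_insert, if_neg hu, filter_erase]
  exact card_erase_lt_of_mem (mem_filter.mpr ⟨hv, hpv⟩)

section

omit [Fintype V] [DecidableEq V]

variable {G : SimpleGraph V} {S T : Finset V} {u v w : V} {e : Sym2 V}

theorem veDominates_of_mem (h : u ∈ e) : veDominates G u e := ⟨u, h, Or.inl rfl⟩

theorem veDominates_of_adj_of_mem (hwu : G.Adj w u) (h : u ∈ e) : veDominates G w e :=
  ⟨u, h, Or.inr hwu⟩

theorem mem_of_veDominates_of_forall_adj_eq (hu : ∀ x, G.Adj v x → x = u) (he : e ∈ G.edgeSet)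
    (hd : veDominates G v e) : u ∈ e := by
  obtain ⟨x, hx, rfl | hvx⟩ := hd
  · induction e using Sym2.inductionOn with
    | hf a b =>
      rcases Sym2.mem_iff.mp hx with rfl | rfl
      · simp [hu b he]
      · simp [hu a he.symm]
  · exact hu x hvx ▸ hx

theorem IsIndepSet.subset (hS : IsIndepSet G S) (hT : T ⊆ S) : IsIndepSet G T :=
  fun x hx y hy => hS x (hT hx) y (hT hy)

theorem IsVEDomSet.of_forall_veDominates (hS : IsVEDomSet G S)
    (h : ∀ z ∈ S, ∀ e ∈ G.edgeSet, veDominates G z e → ∃ w ∈ T, veDominates G w e) :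
    IsVEDomSet G T := fun e he =>
  let ⟨z, hz, hze⟩ := hS e he
  h z hz e he hze

theorem isVEDomSet_of_forall_exists_eq_or_adj (h : ∀ a, ∃ w ∈ S, w = a ∨ G.Adj w a) :
    IsVEDomSet G S := by
  intro e he
  induction e using Sym2.inductionOn with
  | hf a b =>
    obtain ⟨w, hw, hwa⟩ := h a
    exact ⟨w, hw, a, Sym2.mem_mk_left a b, hwa.imp Eq.symm id⟩

theorem iVE_le_card (hS : IsVEDomSet G S) (hI : IsIndepSet G S) : iVE G ≤ #S :=
  Nat.sInf_le ⟨S, hS, hI, rfl⟩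

end

section

omit [Fintype V]

variable {G : SimpleGraph V} {S : Finset V} {u v w : V}

theorem isIndepSet_insert :
    IsIndepSet G (insert u S) ↔ IsIndepSet G S ∧ ∀ w ∈ S, ¬ G.Adj u w := by
  simp only [IsIndepSet, mem_insert, forall_eq_or_imp, G.irrefl, not_false_eq_true, true_and]
  exact ⟨fun h => ⟨fun x hx => (h.2 x hx).2, h.1⟩,
    fun h => ⟨h.2, fun x hx => ⟨fun hxu => h.2 x hx hxu.symm, h.1 x hx⟩⟩⟩

theorem IsVEDomSet.insert_erase_of_forall_adj_eq (hS : IsVEDomSet G S)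
    (hu : ∀ x, G.Adj v x → x = u) : IsVEDomSet G (insert u (S.erase v)) := by
  refine hS.of_forall_veDominates fun z hz e he hze => ?_
  by_cases hzv : z = v
  · subst hzv
    exact ⟨u, mem_insert_self u _, veDominates_of_mem (mem_of_veDominates_of_forall_adj_eq hu he hze)⟩
  · exact ⟨z, mem_insert_of_mem (mem_erase.mpr ⟨hzv, hz⟩), hze⟩

theorem IsVEDomSet.erase_of_forall_adj_eq (hS : IsVEDomSet G S) (hu : ∀ x, G.Adj v x → x = u)
    (hw : w ∈ S.erase v) (hwu : G.Adj w u) : IsVEDomSet G (S.erase v) := by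
  refine hS.of_forall_veDominates fun z hz e he hze => ?_
  by_cases hzv : z = v
  · subst hzv
    exact ⟨w, hw, veDominates_of_adj_of_mem hwu (mem_of_veDominates_of_forall_adj_eq hu he hze)⟩
  · exact ⟨z, mem_erase.mpr ⟨hzv, hz⟩, hze⟩

theorem isVEDomSet_isIndepSet_card_eq_iVE_insert_erase (hS : IsVEDomSet G S) (hI : IsIndepSet G S)
    (hcard : #S = iVE G) (hv : v ∈ S) (hvu : G.Adj v u) (hu : ∀ x, G.Adj v x → x = u) :
    IsVEDomSet G (insert u (S.erase v)) ∧ IsIndepSet G (insert u (S.erase v)) ∧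
      #(insert u (S.erase v)) = iVE G := by
  have huS : u ∉ S.erase v := fun h => hI v hv u (mem_of_mem_erase h) hvu
  have hnadj : ∀ w ∈ S.erase v, ¬ G.Adj u w := fun w hw huw => by
    have := iVE_le_card (hS.erase_of_forall_adj_eq hu hw huw.symm) (hI.subset (erase_subset v S))
    rw [card_erase_of_mem hv] at this
    have := card_pos.mpr ⟨v, hv⟩
    omega
  refine ⟨hS.insert_erase_of_forall_adj_eq hu,
    isIndepSet_insert.mpr ⟨hI.subset (erase_subset v S), hnadj⟩, ?_⟩
  rw [card_insert_of_notMem huS, card_erase_add_one hv, hcard]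

end

theorem exists_isVEDomSet_isIndepSet (G : SimpleGraph V) : ∃ S, IsVEDomSet G S ∧ IsIndepSet G S := by
  classical
  -- a maximum independent set dominates every vertex
  obtain ⟨S, hS, hmax⟩ := exists_max_image (univ.filter fun S => IsIndepSet G S) card
    ⟨∅, mem_filter.mpr ⟨mem_univ _, by simp [IsIndepSet]⟩⟩
  rw [mem_filter] at hS
  refine ⟨S, isVEDomSet_of_forall_exists_eq_or_adj fun a => ?_, hS.2⟩
  by_contra! h
  have haS : a ∉ S := fun haS => (h a haS).1 rfl
  have := hmax (insert a S) (mem_filter.mpr ⟨mem_univ _,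
    isIndepSet_insert.mpr ⟨hS.2, fun w hw hwa => (h w hw).2 hwa.symm⟩⟩)
  rw [card_insert_of_notMem haS] at this
  omega

theorem exists_isVEDomSet_isIndepSet_card_eq_iVE (G : SimpleGraph V) :
    ∃ S, IsVEDomSet G S ∧ IsIndepSet G S ∧ #S = iVE G :=
  let ⟨S, hS, hI⟩ := exists_isVEDomSet_isIndepSet G
  Nat.sInf_mem (s := {n | ∃ S, IsVEDomSet G S ∧ IsIndepSet G S ∧ #S = n})
    ⟨#S, S, hS, hI, rfl⟩

/-- For every tree `T` with at least 3 vertices, there exists a minimum independent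
ve-dominating set containing no leaf. -/
theorem stmt1 (G : SimpleGraph V) [DecidableRel G.Adj] (hT : G.IsTree)
    (h3 : 3 ≤ Fintype.card V) :
    ∃ S : Finset V, IsVEDomSet G S ∧ IsIndepSet G S ∧ S.card = iVE G ∧
      ∀ v ∈ S, G.degree v ≠ 1 := by
  classical
  obtain ⟨S₀, hS₀⟩ := exists_isVEDomSet_isIndepSet_card_eq_iVE G
  obtain ⟨S, hS, hmin⟩ := exists_min_image
    (univ.filter fun S => IsVEDomSet G S ∧ IsIndepSet G S ∧ #S = iVE G)
    (fun S => #(S.filter (G.degree · = 1))) ⟨S₀, by simpa using hS₀⟩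
  obtain ⟨hdom, hind, hcard⟩ := (mem_filter.mp hS).2
  refine ⟨S, hdom, hind, hcard, fun v hv hdeg => ?_⟩
  obtain ⟨u, hvu, hu⟩ := SimpleGraph.degree_eq_one_iff_existsUnique_adj.mp hdeg
  have hdegu := hT.connected.preconnected.degree_ne_one_of_forall_adj_eq h3 hvu.symm hu
  have := hmin (insert u (S.erase v)) (mem_filter.mpr ⟨mem_univ _,
    isVEDomSet_isIndepSet_card_eq_iVE_insert_erase hdom hind hcard hv hvu hu⟩)
  exact (card_filter_insert_erase_lt (p := (G.degree · = 1)) hdegu hv hdeg).not_ge this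
end

section
/- Let T be a tree with at least 3 vertices, let S be an independent ve-dominating set of T, let x ∈ S be a leaf with (unique) neighbour y, and suppose S ∩ N[y] = {x}. Then (S \ {x}) ∪ {y} is an independent ve-dominating set of T of the same cardinality as S. -/
variable {V : Type*} [Fintype V] [DecidableEq V]

section

variable {α : Type*} {G : SimpleGraph α}

theorem veDominates.mono {u v : α} {e : Sym2 α}
    (hN : ∀ w, w = u ∨ G.Adj u w → w = v ∨ G.Adj v w) (h : veDominates G u e) :
    veDominates G v e :=
  let ⟨w, hwe, hw⟩ := h
  ⟨w, hwe, hN w hw⟩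

/-- A leaf's closed neighbourhood lies in that of its neighbour. -/
theorem veDominates_of_degree_eq_one {x y : α} [Fintype (G.neighborSet x)]
    {e : Sym2 α} (hleaf : G.degree x = 1) (hxy : G.Adj x y) (h : veDominates G x e) :
    veDominates G y e := by
  refine h.mono fun w hw => ?_
  rcases hw with rfl | hw
  · exact Or.inr hxy.symm
  · exact Or.inl ((SimpleGraph.degree_eq_one_iff_existsUnique_adj.mp hleaf).unique hw hxy)

theorem IsVEDomSet.insert_erase [DecidableEq α] {S : Finset α} {x y : α}
    (hdom : IsVEDomSet G S) (hxy : ∀ e, veDominates G x e → veDominates G y e) :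
    IsVEDomSet G (insert y (S.erase x)) := by
  intro e he
  obtain ⟨u, huS, hu⟩ := hdom e he
  by_cases hux : u = x
  · subst hux
    exact ⟨y, Finset.mem_insert_self _ _, hxy e hu⟩
  · exact ⟨u, Finset.mem_insert_of_mem (Finset.mem_erase.mpr ⟨hux, huS⟩), hu⟩

theorem IsIndepSet.mono {S T : Finset α} (hS : IsIndepSet G S)
    (hTS : T ⊆ S) : IsIndepSet G T :=
  fun u hu v hv => hS u (hTS hu) v (hTS hv)

theorem IsIndepSet.insert [DecidableEq α] {S : Finset α} {y : α} (hS : IsIndepSet G S)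
    (hy : ∀ z ∈ S, ¬ G.Adj y z) : IsIndepSet G (insert y S) := by
  intro u hu v hv huv
  rcases Finset.mem_insert.mp hu with rfl | hu <;> rcases Finset.mem_insert.mp hv with hv | hv
  · exact G.irrefl (hv ▸ huv)
  · exact hy v hv huv
  · exact hy u hu (hv ▸ huv.symm)
  · exact hS u hu v hv huv

end

theorem stmt2_general (G : SimpleGraph V) [DecidableRel G.Adj] (S : Finset V)
    (hdom : IsVEDomSet G S) (hind : IsIndepSet G S)
    (x y : V) (hxS : x ∈ S) (hleaf : G.degree x = 1) (hxy : G.Adj x y)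
    (hN : ∀ z ∈ S, (z = y ∨ G.Adj y z) → z = x) :
    IsVEDomSet G (insert y (S.erase x)) ∧ IsIndepSet G (insert y (S.erase x)) ∧
      (insert y (S.erase x)).card = S.card := by
  have hNy : ∀ z ∈ S.erase x, ¬ (z = y ∨ G.Adj y z) := fun z hz h =>
    Finset.ne_of_mem_erase hz (hN z (Finset.mem_of_mem_erase hz) h)
  refine ⟨hdom.insert_erase fun e => veDominates_of_degree_eq_one hleaf hxy, ?_, ?_⟩
  · exact (hind.mono (Finset.erase_subset x S)).insert fun z hz hyz => hNy z hz (Or.inr hyz)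
  · rw [Finset.card_insert_of_notMem fun hy => hNy y hy (Or.inl rfl),
      Finset.card_erase_add_one hxS]

/-- If `x ∈ S` is a leaf with neighbour `y` and `S ∩ N[y] = {x}`, then replacing
`x` by `y` gives an independent ve-dominating set of the same cardinality. -/
theorem stmt2 (G : SimpleGraph V) [DecidableRel G.Adj] (hT : G.IsTree)
    (h3 : 3 ≤ Fintype.card V) (S : Finset V)
    (hdom : IsVEDomSet G S) (hind : IsIndepSet G S)
    (x y : V) (hxS : x ∈ S) (hleaf : G.degree x = 1) (hxy : G.Adj x y)
    (hN : ∀ z ∈ S, (z = y ∨ G.Adj y z) → z = x) :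
    IsVEDomSet G (insert y (S.erase x)) ∧ IsIndepSet G (insert y (S.erase x)) ∧
      (insert y (S.erase x)).card = S.card :=
  stmt2_general G S hdom hind x y hxS hleaf hxy hN
end

section
/- Let T be a tree with at least 3 vertices, let S be an independent ve-dominating set of T, let x ∈ S be a leaf with neighbour y, and suppose there exists a vertex z ∈ S with z ≠ x and z adjacent to y. Then S \ {x} is still an independent ve-dominating set of T. In particular, no minimum independent ve-dominating set contains such a leaf x. -/
variable {V : Type*} [Fintype V] [DecidableEq V]

/-- If `x ∈ S` is a leaf with neighbour `y` and some other vertex of `S` is adjacent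
to `y`, then `S \ {x}` is still an independent ve-dominating set; in particular
`S` is not minimum. -/
theorem stmt3 (G : SimpleGraph V) [DecidableRel G.Adj] (hT : G.IsTree)
    (h3 : 3 ≤ Fintype.card V) (S : Finset V)
    (hdom : IsVEDomSet G S) (hind : IsIndepSet G S)
    (x y : V) (hxS : x ∈ S) (hleaf : G.degree x = 1) (hxy : G.Adj x y)
    (z : V) (hzS : z ∈ S) (hzx : z ≠ x) (hzy : G.Adj z y) :
    IsVEDomSet G (S.erase x) ∧ IsIndepSet G (S.erase x) ∧ S.card ≠ iVE G := by
  have hy : ∀ w, G.Adj x w → w = y := by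
    intro w hw
    have hcard : (G.neighborFinset x).card ≤ 1 := by
      rw [← G.card_neighborFinset_eq_degree] at hleaf; omega
    exact Finset.card_le_one.mp hcard w ((G.mem_neighborFinset x w).mpr hw) y
      ((G.mem_neighborFinset x y).mpr hxy)
  have key : ∀ e ∈ G.edgeSet, veDominates G x e → veDominates G z e := by
    intro e he hx
    have hye : y ∈ e := by
      induction e with
      | h a b =>
        rw [SimpleGraph.mem_edgeSet] at he
        obtain ⟨w, hw, hcase⟩ := hx
        rw [Sym2.mem_iff] at hw ⊢
        rcases hcase with rfl | hadj
        · rcases hw with rfl | rfl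
          · right; exact (hy b he).symm
          · left; exact (hy a he.symm).symm
        · have := hy w hadj
          subst this
          exact hw
    exact ⟨y, hye, Or.inr hzy⟩
  have hdomE : IsVEDomSet G (S.erase x) := by
    intro e he
    obtain ⟨u, huS, hu⟩ := hdom e he
    by_cases hux : u = x
    · subst hux
      exact ⟨z, Finset.mem_erase.mpr ⟨hzx, hzS⟩, key e he hu⟩
    · exact ⟨u, Finset.mem_erase.mpr ⟨hux, huS⟩, hu⟩
  have hindE : IsIndepSet G (S.erase x) := fun u hu v hv =>
    hind u (Finset.mem_of_mem_erase hu) v (Finset.mem_of_mem_erase hv)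
  refine ⟨hdomE, hindE, ?_⟩
  have hle : iVE G ≤ (S.erase x).card :=
    Nat.sInf_le ⟨S.erase x, hdomE, hindE, rfl⟩
  have hlt : (S.erase x).card < S.card := Finset.card_erase_lt_of_mem hxS
  omega
end

section
/- Let G be a finite simple labelled graph with vertex labels l and edge labels m. Let B ⊆ V(G) induce a complete subgraph, let c ∈ B, let P = B \ {c} be nonempty, suppose every vertex of P has all of its neighbours inside B, and suppose l(v) = 0 for every v ∈ B. Assume at least two edges with both endpoints in B have label 1, and that the label-1 edges inside B form a clique (i.e., whenever ux and vy are edges inside B with m(ux) = m(vy) = 1 and u ≠ v, the edge uv also has m(uv) = 1). Let G' be the labelled graph obtained from G by deleting all vertices of P, changing the label of c to l(c) = 1, and changing to 0 the label of every edge of G − P that is ve-dominated by c; all other labels are unchanged. Then γ_opve(G) = γ_opve(G'). -/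
variable {V : Type*} [Fintype V] [DecidableEq V]

/-- `D` is an optional ve-dominating set of the subgraph of `G` induced on `W`,
with vertex labels `l` and edge labels `m` (`true` = label 1, `false` = label 0):
`D ⊆ W`, `D` contains every vertex of `W` with label 1, and every edge of the
induced subgraph with label 1 is ve-dominated (within the induced subgraph) by
some vertex of `D`. -/
def IsOptVEDomSet (G : SimpleGraph V) (W : Finset V) (l : V → Bool)
    (m : Sym2 V → Bool) (D : Finset V) : Prop :=
  D ⊆ W ∧ (∀ v ∈ W, l v = true → v ∈ D) ∧
    ∀ e ∈ G.edgeSet, (∀ x ∈ e, x ∈ W) → m e = true →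
      ∃ u ∈ D, ∃ x ∈ e, x = u ∨ G.Adj u x

/-- The optional ve-domination number `γ_opve` of the labelled induced subgraph on `W`. -/
noncomputable def gammaOpVE (G : SimpleGraph V) (W : Finset V) (l : V → Bool)
    (m : Sym2 V → Bool) : ℕ :=
  sInf {n | ∃ D : Finset V, IsOptVEDomSet G W l m D ∧ D.card = n}

/-- Reduction rule (a): if the end block `B` (all of whose non-cut vertices `P` have
their neighbourhoods inside `B`, and all of whose vertices have label 0) contains at
least two label-1 edges, and the label-1 edges of `B` form a clique, then deleting
`P`, setting `l(c) = 1` and setting `m = 0` on every edge of `G − P` ve-dominated by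
`c` preserves the optional ve-domination number. -/
theorem stmt7 (G : SimpleGraph V) (l l' : V → Bool) (m m' : Sym2 V → Bool)
    (B P : Finset V) (c : V)
    (hBclique : ∀ u ∈ B, ∀ v ∈ B, u ≠ v → G.Adj u v)
    (hcB : c ∈ B) (hPdef : P = B.erase c) (hPne : P.Nonempty)
    (hPnbr : ∀ p ∈ P, ∀ x : V, G.Adj p x → x ∈ B)
    (hlB : ∀ v ∈ B, l v = false)
    (htwo : ∃ e₁ ∈ G.edgeSet, ∃ e₂ ∈ G.edgeSet, e₁ ≠ e₂ ∧
      (∀ x ∈ e₁, x ∈ B) ∧ (∀ x ∈ e₂, x ∈ B) ∧ m e₁ = true ∧ m e₂ = true)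
    (hcliq1 : ∀ u v x y : V, u ∈ B → v ∈ B → x ∈ B → y ∈ B →
      G.Adj u x → G.Adj v y → m s(u, x) = true → m s(v, y) = true → u ≠ v →
      m s(u, v) = true)
    (hl'c : l' c = true) (hl' : ∀ v : V, v ≠ c → l' v = l v)
    (hm' : ∀ e ∈ G.edgeSet,
      (((∀ x ∈ e, x ∉ P) ∧ veDominates G c e) → m' e = false) ∧
      (¬((∀ x ∈ e, x ∉ P) ∧ veDominates G c e) → m' e = m e)) :
    gammaOpVE G Finset.univ l m = gammaOpVE G (Finset.univ \ P) l' m' := by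

  classical
  have hPB : P ⊆ B := by rw [hPdef]; exact Finset.erase_subset _ _
  have hcP : c ∉ P := by rw [hPdef]; exact Finset.notMem_erase _ _
  have hBnotP : ∀ x, x ∈ B → x ∉ P → x = c := by
    intro x hx hxp
    by_contra h
    exact hxp (hPdef ▸ Finset.mem_erase.mpr ⟨h, hx⟩)
  have hPmem : ∀ x, x ∈ B → x ≠ c → x ∈ P := by
    intro x hx hxc
    exact hPdef ▸ Finset.mem_erase.mpr ⟨hxc, hx⟩
  have hfull : ∀ (W : Finset V) (l0 : V → Bool) (m0 : Sym2 V → Bool),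
      IsOptVEDomSet G W l0 m0 W := by
    intro W l0 m0
    refine ⟨subset_rfl, fun v hv _ => hv, ?_⟩
    intro e he hW hm
    induction e using Sym2.ind with
    | _ x y =>
      exact ⟨x, hW x (Sym2.mem_mk_left x y), x, Sym2.mem_mk_left x y, Or.inl rfl⟩
  have hne1 : {n | ∃ D : Finset V, IsOptVEDomSet G Finset.univ l m D ∧ D.card = n}.Nonempty :=
    ⟨_, Finset.univ, hfull _ _ _, rfl⟩
  have hne2 : {n | ∃ D : Finset V, IsOptVEDomSet G (Finset.univ \ P) l' m' D ∧ D.card = n}.Nonempty :=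
    ⟨_, Finset.univ \ P, hfull _ _ _, rfl⟩
  -- a label-1 edge with both endpoints in P
  obtain ⟨e₁, he₁, e₂, he₂, hnee, hB₁, hB₂, hm₁, hm₂⟩ := htwo
  have hsplit : ∀ e ∈ G.edgeSet, (∀ x ∈ e, x ∈ B) → m e = true →
      (∃ a b, G.Adj a b ∧ a ∈ P ∧ b ∈ P ∧ m s(a,b) = true) ∨
      (∃ p ∈ P, e = s(c, p)) := by
    intro e he hB hm
    induction e using Sym2.ind with
    | _ x y =>
      rw [SimpleGraph.mem_edgeSet] at he
      have hx : x ∈ B := hB x (Sym2.mem_mk_left x y)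
      have hy : y ∈ B := hB y (Sym2.mem_mk_right x y)
      by_cases hxc : x = c
      · have hyc : y ≠ c := fun h => G.ne_of_adj he (hxc.trans h.symm)
        exact Or.inr ⟨y, hPmem y hy hyc, by rw [hxc]⟩
      · by_cases hyc : y = c
        · exact Or.inr ⟨x, hPmem x hx hxc, by rw [hyc, Sym2.eq_swap]⟩
        · exact Or.inl ⟨x, y, he, hPmem x hx hxc, hPmem y hy hyc, hm⟩
  obtain ⟨a, b, hab, haP, hbP, hmab⟩ :
      ∃ a b, G.Adj a b ∧ a ∈ P ∧ b ∈ P ∧ m s(a,b) = true := by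
    rcases hsplit e₁ he₁ hB₁ hm₁ with h | ⟨p, hp, hep⟩
    · exact h
    rcases hsplit e₂ he₂ hB₂ hm₂ with h | ⟨q, hq, heq⟩
    · exact h
    have hpq : p ≠ q := fun h => hnee (by rw [hep, heq, h])
    have hpB := hPB hp
    have hqB := hPB hq
    have hpc : p ≠ c := (Finset.mem_erase.mp (hPdef ▸ hp)).1
    have hqc : q ≠ c := (Finset.mem_erase.mp (hPdef ▸ hq)).1
    have hadjpc : G.Adj p c := hBclique p hpB c hcB hpc
    have hadjqc : G.Adj q c := hBclique q hqB c hcB hqc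
    have hadjpq : G.Adj p q := hBclique p hpB q hqB hpq
    have h1 : m s(p, c) = true := by rw [Sym2.eq_swap, ← hep]; exact hm₁
    have h2 : m s(q, c) = true := by rw [Sym2.eq_swap, ← heq]; exact hm₂
    exact ⟨p, q, hadjpq, hp, hq, hcliq1 p q c c hpB hqB hcB hcB hadjpc hadjqc h1 h2 hpq⟩
  apply le_antisymm
  · -- γ(G) ≤ γ(G') : an optimal set for G' works for G
    obtain ⟨D', ⟨hD'W, hD'l, hD'dom⟩, hcard⟩ := Nat.sInf_mem hne2
    have hcD' : c ∈ D' := hD'l c (Finset.mem_sdiff.mpr ⟨Finset.mem_univ c, hcP⟩) hl'c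
    refine Nat.sInf_le ⟨D', ⟨Finset.subset_univ _, ?_, ?_⟩, hcard⟩
    · intro v _ hv
      have hvB : v ∉ B := fun h => by simp [hlB v h] at hv
      have hvc : v ≠ c := fun h => hvB (h ▸ hcB)
      exact hD'l v (Finset.mem_sdiff.mpr ⟨Finset.mem_univ v, fun hp => hvB (hPB hp)⟩)
        ((hl' v hvc) ▸ hv)
    · intro e he _ hm
      by_cases hdom : veDominates G c e
      · obtain ⟨x, hx, hxc⟩ := hdom
        exact ⟨c, hcD', x, hx, hxc⟩
      · have hnotP : ∀ x ∈ e, x ∉ P := by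
          intro x hx hxP
          apply hdom
          have hxB := hPB hxP
          by_cases hxc : x = c
          · exact ⟨x, hx, Or.inl hxc⟩
          · exact ⟨x, hx, Or.inr (hBclique c hcB x hxB (fun h => hxc h.symm))⟩
        have hm'e : m' e = true := by
          rw [(hm' e he).2 (fun h => hdom h.2)]; exact hm
        exact hD'dom e he
          (fun x hx => Finset.mem_sdiff.mpr ⟨Finset.mem_univ x, hnotP x hx⟩) hm'e
  · -- γ(G') ≤ γ(G)
    obtain ⟨D, ⟨hDW, hDl, hDdom⟩, hcard⟩ := Nat.sInf_mem hne1
    obtain ⟨u0, hu0D, hu0B⟩ : ∃ u ∈ D, u ∈ B := by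
      obtain ⟨u, huD, z, hz, hzu⟩ :=
        hDdom s(a, b) (G.mem_edgeSet.mpr hab)
          (fun x _ => Finset.mem_univ x) hmab
      have hzP : z ∈ P := by
        rcases Sym2.mem_iff.mp hz with h | h
        · exact h ▸ haP
        · exact h ▸ hbP
      rcases hzu with h | h
      · exact ⟨u, huD, hPB (h ▸ hzP)⟩
      · exact ⟨u, huD, hPnbr z hzP u h.symm⟩
    have hcle : ((D \ B) ∪ {c}).card ≤ D.card := by
      have hsub : D \ B ⊆ D.erase u0 := by
        intro x hx
        rcases Finset.mem_sdiff.mp hx with ⟨hxD, hxB⟩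
        exact Finset.mem_erase.mpr ⟨fun h => hxB (h ▸ hu0B), hxD⟩
      have h1 : ((D \ B) ∪ {c}).card ≤ (D \ B).card + 1 := by
        simpa using Finset.card_union_le (D \ B) {c}
      have h2 : (D \ B).card ≤ (D.erase u0).card := Finset.card_le_card hsub
      have h3 : (D.erase u0).card = D.card - 1 := Finset.card_erase_of_mem hu0D
      have h4 : 1 ≤ D.card := Finset.card_pos.mpr ⟨u0, hu0D⟩
      omega
    refine le_trans (Nat.sInf_le ⟨(D \ B) ∪ {c}, ⟨?_, ?_, ?_⟩, rfl⟩) (le_trans hcle (le_of_eq hcard))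
    · intro x hx
      rcases Finset.mem_union.mp hx with h | h
      · rcases Finset.mem_sdiff.mp h with ⟨_, hxB⟩
        exact Finset.mem_sdiff.mpr ⟨Finset.mem_univ x, fun hp => hxB (hPB hp)⟩
      · rw [Finset.mem_singleton.mp h]
        exact Finset.mem_sdiff.mpr ⟨Finset.mem_univ c, hcP⟩
    · intro v hv hl'v
      by_cases hvc : v = c
      · exact Finset.mem_union.mpr (Or.inr (Finset.mem_singleton.mpr hvc))
      · have hlv : l v = true := (hl' v hvc) ▸ hl'v
        have hvB : v ∉ B := fun h => by simp [hlB v h] at hlv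
        exact Finset.mem_union.mpr (Or.inl (Finset.mem_sdiff.mpr
          ⟨hDl v (Finset.mem_univ v) hlv, hvB⟩))
    · intro e he hW hm'e
      have hnotP : ∀ x ∈ e, x ∉ P := fun x hx =>
        (Finset.mem_sdiff.mp (hW x hx)).2
      have hdom : ¬ veDominates G c e := by
        intro hd
        have := (hm' e he).1 ⟨hnotP, hd⟩
        rw [this] at hm'e
        exact Bool.false_ne_true hm'e
      have hme : m e = true := by
        rw [← (hm' e he).2 (fun h => hdom h.2)]; exact hm'e
      obtain ⟨u, huD, x, hx, hxu⟩ :=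
        hDdom e he (fun x _ => Finset.mem_univ x) hme
      by_cases huB : u ∈ B
      · exfalso
        apply hdom
        rcases hxu with h | h
        · have : x = c := hBnotP x (h ▸ huB) (hnotP x hx)
          exact ⟨x, hx, Or.inl this⟩
        · by_cases huP : u ∈ P
          · have hxB : x ∈ B := hPnbr u huP x h
            have : x = c := hBnotP x hxB (hnotP x hx)
            exact ⟨x, hx, Or.inl this⟩
          · have : u = c := hBnotP u huB huP
            exact ⟨x, hx, Or.inr (this ▸ h)⟩
      · exact ⟨u, Finset.mem_union.mpr (Or.inl (Finset.mem_sdiff.mpr ⟨huD, huB⟩)),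
          x, hx, hxu⟩
end

section
/- Let G be a finite simple labelled graph with vertex labels l and edge labels m. Let B ⊆ V(G) induce a complete subgraph, let c ∈ B, let P = B \ {c} be nonempty, suppose every vertex of P has all of its neighbours inside B, and suppose l(v) = 0 for every v ∈ B. Assume exactly one edge with both endpoints in B has label 1, and that this edge is not incident to c (i.e., both its endpoints lie in P). Let G' be the labelled graph obtained from G by deleting all vertices of P, changing the label of c to l(c) = 1, and changing to 0 the label of every edge of G − P that is ve-dominated by c; all other labels are unchanged. Then γ_opve(G) = γ_opve(G'). -/
variable {V : Type*} [Fintype V] [DecidableEq V]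

/-- Reduction rule (b): if the end block `B` contains exactly one label-1 edge and
this edge is not incident to the cut vertex `c`, then deleting `P`, setting
`l(c) = 1` and setting `m = 0` on every edge of `G − P` ve-dominated by `c`
preserves the optional ve-domination number. -/
theorem stmt8 (G : SimpleGraph V) (l l' : V → Bool) (m m' : Sym2 V → Bool)
    (B P : Finset V) (c : V)
    (hBclique : ∀ u ∈ B, ∀ v ∈ B, u ≠ v → G.Adj u v)
    (hcB : c ∈ B) (hPdef : P = B.erase c) (hPne : P.Nonempty)
    (hPnbr : ∀ p ∈ P, ∀ x : V, G.Adj p x → x ∈ B)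
    (hlB : ∀ v ∈ B, l v = false)
    (hone : ∃ e₀ ∈ G.edgeSet, (∀ x ∈ e₀, x ∈ P) ∧ m e₀ = true ∧
      ∀ e ∈ G.edgeSet, (∀ x ∈ e, x ∈ B) → m e = true → e = e₀)
    (hl'c : l' c = true) (hl' : ∀ v : V, v ≠ c → l' v = l v)
    (hm' : ∀ e ∈ G.edgeSet,
      (((∀ x ∈ e, x ∉ P) ∧ veDominates G c e) → m' e = false) ∧
      (¬((∀ x ∈ e, x ∉ P) ∧ veDominates G c e) → m' e = m e)) :
    gammaOpVE G Finset.univ l m = gammaOpVE G (Finset.univ \ P) l' m' := by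

  classical
  obtain ⟨e₀, he₀G, he₀P, hme₀, -⟩ := hone
  have hcP : c ∉ P := by rw [hPdef]; exact Finset.notMem_erase c B
  have hPB : P ⊆ B := by rw [hPdef]; exact Finset.erase_subset c B
  have hcW : c ∈ Finset.univ \ P := Finset.mem_sdiff.mpr ⟨Finset.mem_univ c, hcP⟩
  -- nonemptiness of the defining sets
  have hne1 : {n | ∃ D : Finset V, IsOptVEDomSet G Finset.univ l m D ∧ D.card = n}.Nonempty := by
    refine ⟨(Finset.univ : Finset V).card, Finset.univ, ⟨le_refl _, fun v _ _ => Finset.mem_univ v,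
      fun e heG hW hm => ?_⟩, rfl⟩
    exact ⟨e.out.1, Finset.mem_univ _, e.out.1, Sym2.out_fst_mem e, Or.inl rfl⟩
  have hne2 : {n | ∃ D : Finset V, IsOptVEDomSet G (Finset.univ \ P) l' m' D ∧ D.card = n}.Nonempty := by
    refine ⟨(Finset.univ \ P).card, Finset.univ \ P, ⟨le_refl _, fun v hv _ => hv,
      fun e heG hW hm => ?_⟩, rfl⟩
    exact ⟨e.out.1, hW _ (Sym2.out_fst_mem e), e.out.1, Sym2.out_fst_mem e, Or.inl rfl⟩
  unfold gammaOpVE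
  apply le_antisymm
  · -- γ(G) ≤ γ(G')
    obtain ⟨D', hD', hcard⟩ := Nat.sInf_mem hne2
    rw [← hcard]
    apply Nat.sInf_le
    refine ⟨D', ⟨Finset.subset_univ _, ?_, ?_⟩, rfl⟩
    · intro v _ hlv
      have hvB : v ∉ B := fun hvB => by simp [hlB v hvB] at hlv
      have hvc : v ≠ c := fun h => hvB (h ▸ hcB)
      exact hD'.2.1 v (Finset.mem_sdiff.mpr ⟨Finset.mem_univ v, fun hvP => hvB (hPB hvP)⟩)
        ((hl' v hvc).trans hlv)
    · intro e heG _ hme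
      have hcD' : c ∈ D' := hD'.2.1 c hcW hl'c
      by_cases hP : ∀ x ∈ e, x ∉ P
      · by_cases hdom : veDominates G c e
        · obtain ⟨x, hx, hxc⟩ := hdom
          exact ⟨c, hcD', x, hx, hxc⟩
        · have hm'e : m' e = m e := (hm' e heG).2 (fun ⟨_, h⟩ => hdom h)
          exact hD'.2.2 e heG
            (fun x hx => Finset.mem_sdiff.mpr ⟨Finset.mem_univ x, hP x hx⟩)
            (hm'e.trans hme)
      · push_neg at hP
        obtain ⟨x, hx, hxP⟩ := hP
        have hxc : x ≠ c := fun h => hcP (h ▸ hxP)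
        exact ⟨c, hcD', x, hx, Or.inr (hBclique c hcB x (hPB hxP) hxc.symm)⟩
  · -- γ(G') ≤ γ(G)
    obtain ⟨D, hD, hcard⟩ := Nat.sInf_mem hne1
    -- D must meet B (to dominate e₀)
    obtain ⟨u₀, hu₀D, x₀, hx₀, hu₀⟩ := hD.2.2 e₀ he₀G (fun x _ => Finset.mem_univ x) hme₀
    have hu₀B : u₀ ∈ B := by
      rcases hu₀ with h | h
      · exact hPB (h ▸ he₀P x₀ hx₀)
      · exact hPnbr x₀ (he₀P x₀ hx₀) u₀ h.symm
    set D' := insert c (D \ P) with hD'def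
    have hcardle : D'.card ≤ D.card := by
      by_cases hu₀P : u₀ ∈ P
      · calc D'.card ≤ (D \ P).card + 1 := Finset.card_insert_le _ _
          _ ≤ (D.erase u₀).card + 1 := by
              gcongr
              intro y hy
              rw [Finset.mem_sdiff] at hy
              exact Finset.mem_erase.mpr ⟨fun h => hy.2 (h ▸ hu₀P), hy.1⟩
          _ = D.card := Finset.card_erase_add_one hu₀D
      · have hu₀c : u₀ = c := by
          by_contra h
          exact hu₀P (hPdef ▸ Finset.mem_erase.mpr ⟨h, hu₀B⟩)
        apply Finset.card_le_card
        intro y hy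
        rcases Finset.mem_insert.mp hy with rfl | hy
        · exact hu₀c ▸ hu₀D
        · exact (Finset.mem_sdiff.mp hy).1
    calc sInf {n | ∃ D : Finset V, IsOptVEDomSet G (Finset.univ \ P) l' m' D ∧ D.card = n}
        ≤ D'.card := by
          apply Nat.sInf_le
          refine ⟨D', ⟨?_, ?_, ?_⟩, rfl⟩
          · intro y hy
            rcases Finset.mem_insert.mp hy with rfl | hy
            · exact hcW
            · exact Finset.mem_sdiff.mpr ⟨Finset.mem_univ y, (Finset.mem_sdiff.mp hy).2⟩
          · intro v hv hlv
            by_cases hvc : v = c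
            · exact hvc ▸ Finset.mem_insert_self c _
            · refine Finset.mem_insert.mpr (Or.inr (Finset.mem_sdiff.mpr
                ⟨hD.2.1 v (Finset.mem_univ v) ((hl' v hvc) ▸ hlv), (Finset.mem_sdiff.mp hv).2⟩))
          · intro e heG hW hme
            have hnP : ∀ x ∈ e, x ∉ P := fun x hx => (Finset.mem_sdiff.mp (hW x hx)).2
            by_cases hdom : veDominates G c e
            · obtain ⟨x, hx, hxc⟩ := hdom
              exact ⟨c, Finset.mem_insert_self c _, x, hx, hxc⟩
            · have hm'e : m e = true := by
                rw [← (hm' e heG).2 (fun ⟨_, h⟩ => hdom h)]; exact hme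
              obtain ⟨u, huD, x, hx, hux⟩ := hD.2.2 e heG (fun x _ => Finset.mem_univ x) hm'e
              have huP : u ∉ P := by
                intro huP
                rcases hux with rfl | h
                · exact hnP _ hx huP
                · have hxB : x ∈ B := hPnbr u huP x h
                  have hxc : x = c := by
                    by_contra hxc
                    exact hnP x hx (hPdef ▸ Finset.mem_erase.mpr ⟨hxc, hxB⟩)
                  exact hdom ⟨x, hx, Or.inl hxc⟩
              exact ⟨u, Finset.mem_insert.mpr (Or.inr (Finset.mem_sdiff.mpr ⟨huD, huP⟩)), x, hx, hux⟩
      _ ≤ D.card := hcardle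
      _ = sInf {n | ∃ D : Finset V, IsOptVEDomSet G Finset.univ l m D ∧ D.card = n} := hcard
end

section
/- Let G be a finite simple labelled graph with vertex labels l and edge labels m satisfying the invariant that whenever l(p) = 1, every edge ve-dominated by p has label m = 0. Let B ⊆ V(G) induce a complete subgraph, let c ∈ B with l(c) = 0, let P = B \ {c} be nonempty, and suppose every vertex of P has all of its neighbours inside B. Assume no edge with both endpoints in B has label 1, and let k = |{p ∈ P : l(p) = 1}|. Let G' be the labelled graph obtained from G by deleting all vertices of P (labels of the remaining vertices and edges unchanged). Then γ_opve(G) = γ_opve(G') + k. -/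
variable {V : Type*} [Fintype V] [DecidableEq V]

/-- Reduction rule (d): if no edge of the end block `B` has label 1, and the labelling
satisfies the invariant that every edge ve-dominated by a label-1 vertex has label 0,
then deleting `P` (labels unchanged) decreases the optional ve-domination number by
exactly the number `k` of label-1 vertices of `P`. -/
theorem stmt9 (G : SimpleGraph V) (l : V → Bool) (m : Sym2 V → Bool)
    (B P : Finset V) (c : V)
    (hinv : ∀ p : V, l p = true → ∀ e ∈ G.edgeSet, veDominates G p e → m e = false)
    (hBclique : ∀ u ∈ B, ∀ v ∈ B, u ≠ v → G.Adj u v)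
    (hcB : c ∈ B) (hlc : l c = false) (hPdef : P = B.erase c) (hPne : P.Nonempty)
    (hPnbr : ∀ p ∈ P, ∀ x : V, G.Adj p x → x ∈ B)
    (hnone : ∀ e ∈ G.edgeSet, (∀ x ∈ e, x ∈ B) → m e = false) :
    gammaOpVE G Finset.univ l m =
      gammaOpVE G (Finset.univ \ P) l m + (P.filter (fun p => l p = true)).card := by
  classical
  set W' : Finset V := Finset.univ \ P with hW'
  set P₁ : Finset V := P.filter (fun p => l p = true) with hP₁
  have hPB : P ⊆ B := by rw [hPdef]; exact Finset.erase_subset _ _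
  have hcP : c ∉ P := by rw [hPdef]; exact Finset.notMem_erase _ _
  have hcW' : c ∈ W' := Finset.mem_sdiff.mpr ⟨Finset.mem_univ _, hcP⟩
  -- edges touching P are label-0
  have htouch : ∀ e ∈ G.edgeSet, (∃ x ∈ e, x ∈ P) → m e = false := by
    intro e
    induction e using Sym2.ind with
    | _ u v =>
      intro he hx
      obtain ⟨x, hxe, hxP⟩ := hx
      have hadj : G.Adj u v := he
      rw [Sym2.mem_iff] at hxe
      apply hnone _ he
      intro y hy
      rw [Sym2.mem_iff] at hy
      rcases hxe with rfl | rfl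
      · rcases hy with rfl | rfl
        · exact hPB hxP
        · exact hPnbr _ hxP _ hadj
      · rcases hy with rfl | rfl
        · exact hPnbr _ hxP _ hadj.symm
        · exact hPB hxP
  have hself : ∀ W : Finset V, IsOptVEDomSet G W l m W := by
    intro W
    refine ⟨Finset.Subset.refl _, fun v hv _ => hv, ?_⟩
    intro e
    induction e using Sym2.ind with
    | _ u v =>
      intro he hW hm
      exact ⟨u, hW u (Sym2.mem_mk_left u v), u, Sym2.mem_mk_left u v, Or.inl rfl⟩
  have hne : ∀ W : Finset V,
      {n | ∃ D : Finset V, IsOptVEDomSet G W l m D ∧ D.card = n}.Nonempty :=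
    fun W => ⟨W.card, W, hself W, rfl⟩
  apply le_antisymm
  · -- γ ≤ γ' + k
    obtain ⟨D', hD', hcard'⟩ := Nat.sInf_mem (hne W')
    have hdisj : Disjoint D' P₁ := by
      refine Finset.disjoint_left.mpr fun x hx hx1 => ?_
      have := hD'.1 hx
      exact (Finset.mem_sdiff.mp this).2 (Finset.mem_filter.mp hx1).1
    refine le_trans (Nat.sInf_le ⟨D' ∪ P₁, ⟨Finset.subset_univ _, ?_, ?_⟩,
      Finset.card_union_of_disjoint hdisj⟩) ?_
    · intro v _ hv
      by_cases hvP : v ∈ P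
      · exact Finset.mem_union_right _ (Finset.mem_filter.mpr ⟨hvP, hv⟩)
      · exact Finset.mem_union_left _
          (hD'.2.1 v (Finset.mem_sdiff.mpr ⟨Finset.mem_univ _, hvP⟩) hv)
    · intro e he _ hm
      have hW : ∀ x ∈ e, x ∈ W' := by
        intro x hx
        refine Finset.mem_sdiff.mpr ⟨Finset.mem_univ _, fun hxP => ?_⟩
        have := htouch e he ⟨x, hx, hxP⟩
        simp [this] at hm
      obtain ⟨u, hu, hx⟩ := hD'.2.2 e he hW hm
      exact ⟨u, Finset.mem_union_left _ hu, hx⟩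
    · rw [hcard']
      exact le_rfl
  · -- γ' + k ≤ γ
    obtain ⟨D, hD, hcard⟩ := Nat.sInf_mem (hne Finset.univ)
    have hγ : gammaOpVE G Finset.univ l m = D.card := hcard.symm
    have hP₁D : P₁ ⊆ D := by
      intro x hx
      obtain ⟨hxP, hlx⟩ := Finset.mem_filter.mp hx
      exact hD.2.1 x (Finset.mem_univ _) hlx
    by_cases hcase : ∀ p ∈ D ∩ P, l p = true
    · -- D ∩ P = P₁, use D \ P
      have hinter : D ∩ P = P₁ := by
        apply Finset.Subset.antisymm
        · intro x hx
          exact Finset.mem_filter.mpr ⟨(Finset.mem_inter.mp hx).2, hcase x hx⟩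
        · intro x hx
          exact Finset.mem_inter.mpr ⟨hP₁D hx, (Finset.mem_filter.mp hx).1⟩
      have hmem : IsOptVEDomSet G W' l m (D \ P) := by
        refine ⟨?_, ?_, ?_⟩
        · intro x hx
          obtain ⟨hxD, hxP⟩ := Finset.mem_sdiff.mp hx
          exact Finset.mem_sdiff.mpr ⟨Finset.mem_univ _, hxP⟩
        · intro v hv hlv
          exact Finset.mem_sdiff.mpr ⟨hD.2.1 v (Finset.mem_univ _) hlv,
            (Finset.mem_sdiff.mp hv).2⟩
        · intro e he hW hm
          obtain ⟨u, hu, x, hxe, hx⟩ := hD.2.2 e he (fun x _ => Finset.mem_univ _) hm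
          by_cases huP : u ∈ P
          · exfalso
            have hlu : l u = true := hcase u (Finset.mem_inter.mpr ⟨hu, huP⟩)
            have := hinv u hlu e he ⟨x, hxe, hx⟩
            simp [this] at hm
          · exact ⟨u, Finset.mem_sdiff.mpr ⟨hu, huP⟩, x, hxe, hx⟩
      have h1 : gammaOpVE G W' l m ≤ (D \ P).card := Nat.sInf_le ⟨_, hmem, rfl⟩
      have h2 : (D \ P).card + P₁.card = D.card := by
        rw [← hinter, Finset.card_sdiff_add_card_inter]
      omega
    · push_neg at hcase
      obtain ⟨p, hpDP, hlp⟩ := hcase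
      have hlpf : l p = false := by
        cases h : l p with
        | false => rfl
        | true => exact absurd h hlp
      have hmem : IsOptVEDomSet G W' l m (insert c (D \ P)) := by
        refine ⟨?_, ?_, ?_⟩
        · intro x hx
          rcases Finset.mem_insert.mp hx with rfl | hx
          · exact hcW'
          · exact Finset.mem_sdiff.mpr ⟨Finset.mem_univ _,
              (Finset.mem_sdiff.mp hx).2⟩
        · intro v hv hlv
          exact Finset.mem_insert_of_mem (Finset.mem_sdiff.mpr
            ⟨hD.2.1 v (Finset.mem_univ _) hlv, (Finset.mem_sdiff.mp hv).2⟩)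
        · intro e he hW hm
          obtain ⟨u, hu, x, hxe, hx⟩ := hD.2.2 e he (fun x _ => Finset.mem_univ _) hm
          by_cases huP : u ∈ P
          · have hxW : x ∈ W' := hW x hxe
            have hxP : x ∉ P := (Finset.mem_sdiff.mp hxW).2
            rcases hx with rfl | hadj
            · exact absurd huP hxP
            · have hxB : x ∈ B := hPnbr u huP x hadj
              have hxc : x = c := by
                by_contra hxc
                exact hxP (hPdef ▸ Finset.mem_erase.mpr ⟨hxc, hxB⟩)
              exact ⟨c, Finset.mem_insert_self _ _, x, hxe, Or.inl hxc⟩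
          · exact ⟨u, Finset.mem_insert_of_mem (Finset.mem_sdiff.mpr ⟨hu, huP⟩),
              x, hxe, hx⟩
      have h1 : gammaOpVE G W' l m ≤ (insert c (D \ P)).card :=
        Nat.sInf_le ⟨_, hmem, rfl⟩
      have h2 : (insert c (D \ P)).card ≤ (D \ P).card + 1 :=
        Finset.card_insert_le _ _
      have h3 : (insert p P₁) ⊆ D ∩ P := by
        intro x hx
        rcases Finset.mem_insert.mp hx with rfl | hx
        · exact hpDP
        · exact Finset.mem_inter.mpr ⟨hP₁D hx, (Finset.mem_filter.mp hx).1⟩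
      have h4 : P₁.card + 1 ≤ (D ∩ P).card := by
        have hp1 : p ∉ P₁ := by
          simp [hP₁, Finset.mem_filter, hlpf]
        calc P₁.card + 1 = (insert p P₁).card := (Finset.card_insert_of_notMem hp1).symm
        _ ≤ (D ∩ P).card := Finset.card_le_card h3
      have h5 : (D \ P).card + (D ∩ P).card = D.card :=
        Finset.card_sdiff_add_card_inter _ _
      omega
end
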